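/- For every positive integer k and every positive integer N, there exists a finite simple connected graph G (with at least 2 vertices) such that γ_L^k(G) − γ_k(G) ≥ N. -/

import Mathlib

open SimpleGraph Finset

/-- `D` is a distance-`k` dominating set of `G`: every vertex outside `D` is within
distance `k` of some vertex of `D`. -/
def IsKDomSet {V : Type*} (G : SimpleGraph V) (k : ℕ) (D : Finset V) : Prop :=
  ∀ u : V, u ∉ D → ∃ w ∈ D, G.dist u w ≤ k

/-- `R` is a distance-`k` resolving set of `G`: any two distinct vertices are
distinguished by the truncated distance `d_k(x,y) = min (d(x,y)) (k+1)` to some vertex of `R`. -/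
def IsKResSet {V : Type*} (G : SimpleGraph V) (k : ℕ) (R : Finset V) : Prop :=
  ∀ x y : V, x ≠ y → ∃ z ∈ R, min (G.dist x z) (k + 1) ≠ min (G.dist y z) (k + 1)

/-- The distance-`k` domination number `γ_k(G)`. -/
noncomputable def kdom {V : Type*} (G : SimpleGraph V) (k : ℕ) : ℕ :=
  sInf {m : ℕ | ∃ D : Finset V, IsKDomSet G k D ∧ D.card = m}

/-- The distance-`k` dimension `dim_k(G)`. -/
noncomputable def kdim {V : Type*} (G : SimpleGraph V) (k : ℕ) : ℕ :=
  sInf {m : ℕ | ∃ R : Finset V, IsKResSet G k R ∧ R.card = m}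

/-- The distance-`k` location-domination number `γ_L^k(G)`. -/
noncomputable def kld {V : Type*} (G : SimpleGraph V) (k : ℕ) : ℕ :=
  sInf {m : ℕ | ∃ S : Finset V, IsKDomSet G k S ∧ IsKResSet G k S ∧ S.card = m}

/-!
In a connected graph, two vertices with the same neighbourhood are equidistant from every other
vertex, so no vertex other than themselves tells them apart and every resolving set contains one
of them. In the star with `N + 2` leaves the leaves are pairwise such twins, so a locating set
misses at most one leaf and has at least `N + 1` vertices, while the centre alone dominates
at every distance `k ≥ 1`.
-/

variable {V : Type*} {G : SimpleGraph V} {k : ℕ}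

namespace SimpleGraph

lemma dist_le_of_neighborSet_eq (hG : G.Connected) {x y z : V}
    (h : G.neighborSet x = G.neighborSet y) (hzy : z ≠ y) : G.dist x z ≤ G.dist y z := by
  obtain ⟨p, hp⟩ := (hG y z).exists_walk_length_eq_dist
  cases p with
  | nil => exact absurd rfl hzy
  | @cons _ w _ hyw q =>
    have hxw : G.Adj x w := by
      rw [← mem_neighborSet, h]
      exact hyw
    exact hp ▸ dist_le (.cons hxw q)

lemma dist_eq_of_neighborSet_eq (hG : G.Connected) {x y z : V}
    (h : G.neighborSet x = G.neighborSet y) (hzx : z ≠ x) (hzy : z ≠ y) :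
    G.dist x z = G.dist y z :=
  le_antisymm (dist_le_of_neighborSet_eq hG h hzy) (dist_le_of_neighborSet_eq hG h.symm hzx)

lemma neighborSet_starGraph_of_ne {r x : V} (hx : x ≠ r) :
    (starGraph r).neighborSet x = {r} := by
  ext w
  simp only [mem_neighborSet, starGraph_adj, Set.mem_singleton_iff]
  constructor
  · rintro ⟨-, h | h⟩
    exacts [absurd h hx, h]
  · rintro rfl
    exact ⟨hx, Or.inr rfl⟩

end SimpleGraph

lemma kdom_le_card {D : Finset V} (hD : IsKDomSet G k D) : kdom G k ≤ D.card :=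
  Nat.sInf_le ⟨D, hD, rfl⟩

lemma isKDomSet_singleton_of_isUniversal {r : V} (hr : G.IsUniversal r) (hk : 1 ≤ k) :
    IsKDomSet G k {r} := by
  intro u hu
  refine ⟨r, mem_singleton_self r, ?_⟩
  rw [dist_eq_one_iff_adj.mpr (hr (Ne.symm (notMem_singleton.mp hu))).symm]
  exact hk

lemma isKResSet_univ [Fintype V] (hG : G.Connected) : IsKResSet G k univ := by
  intro x y hxy
  refine ⟨x, mem_univ x, ?_⟩
  have hyx : 0 < G.dist y x := hG.pos_dist_of_ne hxy.symm
  rw [dist_self]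
  omega

lemma le_kld [Fintype V] (hG : G.Connected) {m : ℕ}
    (h : ∀ S : Finset V, IsKDomSet G k S → IsKResSet G k S → m ≤ S.card) : m ≤ kld G k := by
  refine le_csInf ⟨_, univ, fun u hu => absurd (mem_univ u) hu, isKResSet_univ hG, rfl⟩ ?_
  rintro _ ⟨S, hSdom, hSres, rfl⟩
  exact h S hSdom hSres

lemma IsKResSet.mem_or_mem_of_dist_eq {R : Finset V} (hR : IsKResSet G k R) {x y : V}
    (hxy : x ≠ y) (h : ∀ z, z ≠ x → z ≠ y → G.dist x z = G.dist y z) : x ∈ R ∨ y ∈ R := by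
  by_contra! hxyR
  obtain ⟨z, hz, hne⟩ := hR x y hxy
  exact hne (by rw [h z (hz.ne_of_notMem hxyR.1) (hz.ne_of_notMem hxyR.2)])

lemma IsKResSet.card_le_card_add_one_of_neighborSet_eq [DecidableEq V] {R T : Finset V}
    (hR : IsKResSet G k R) (hG : G.Connected)
    (hT : ∀ x ∈ T, ∀ y ∈ T, G.neighborSet x = G.neighborSet y) : T.card ≤ R.card + 1 := by
  have hmissed : (T \ R).card ≤ 1 := by
    refine card_le_one.mpr fun x hx y hy => ?_
    rw [mem_sdiff] at hx hy
    by_contra hxy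
    have hxyR := hR.mem_or_mem_of_dist_eq hxy fun _ hzx hzy =>
      dist_eq_of_neighborSet_eq hG (hT x hx.1 y hy.1) hzx hzy
    exact hxyR.elim hx.2 hy.2
  have := card_le_card_sdiff_add_card (s := T) (t := R)
  omega

theorem stmt_9_general (k : ℕ) (hk : 1 ≤ k) (N : ℕ) :
    ∃ (n : ℕ) (G : SimpleGraph (Fin n)), 2 ≤ n ∧ G.Connected ∧
      kdom G k + N ≤ kld G k := by
  have hG := connected_starGraph (0 : Fin (N + 3))
  refine ⟨N + 3, starGraph 0, by omega, hG, ?_⟩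
  have hdom : kdom (starGraph (0 : Fin (N + 3))) k ≤ 1 :=
    kdom_le_card (isKDomSet_singleton_of_isUniversal isUniversal_starGraph_self hk)
  have hld : N + 1 ≤ kld (starGraph (0 : Fin (N + 3))) k := by
    refine le_kld hG fun S _ hS => ?_
    have hleaves := hS.card_le_card_add_one_of_neighborSet_eq (T := univ.erase 0) hG
      fun x hx y hy => by
        rw [neighborSet_starGraph_of_ne (ne_of_mem_erase hx),
          neighborSet_starGraph_of_ne (ne_of_mem_erase hy)]
    rw [card_erase_of_mem (mem_univ _), card_univ, Fintype.card_fin] at hleaves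
    omega
  omega

/-- For every positive integer `k` and every positive integer `N`, there is a finite
simple connected graph `G` (with at least 2 vertices) with `γ_L^k(G) - γ_k(G) ≥ N`. -/
theorem stmt_9 (k : ℕ) (hk : 1 ≤ k) (N : ℕ) (hN : 1 ≤ N) :
    ∃ (n : ℕ) (G : SimpleGraph (Fin n)), 2 ≤ n ∧ G.Connected ∧
      kdom G k + N ≤ kld G k :=
  stmt_9_general k hk N
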